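/- arXiv:2604.26867 — 6 statements merged into one kernel-verified Lean document; each statement's English description precedes it below -/
import Mathlib

section
/- Let $f : \mathbb{R}^d \to \mathbb{R}$ be differentiable with $L$-Lipschitz gradient, and fix $x$ with $\nabla f(x) \neq 0$. Let $\hat{n} := \nabla f(x)/\|\nabla f(x)\|$ and $r := \|\nabla f(x)\|/L$. Then the closed ball $B(x - r\hat{n}, r)$ is contained in the sublevel set $\{y : f(y) \le f(x)\}$, and the closed ball $B(x + r\hat{n}, r)$ is contained in the superlevel set $\{y : f(y) \ge f(x)\}$. -/
open RealInnerProductSpace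

theorem descent_aux {d : ℕ} (f : EuclideanSpace ℝ (Fin d) → ℝ) (L : ℝ) (hL : 0 < L)
    (hdiff : Differentiable ℝ f)
    (hlip : ∀ x y : EuclideanSpace ℝ (Fin d),
      ‖gradient f x - gradient f y‖ ≤ L * ‖x - y‖)
    (x u : EuclideanSpace ℝ (Fin d)) :
    |f (x + u) - f x - ⟪gradient f x, u⟫| ≤ L / 2 * ‖u‖ ^ 2 := by
  set g := gradient f x with hg
  have hline : ∀ t : ℝ, HasDerivAt (fun s : ℝ => f (x + s • u))
      ⟪gradient f (x + t • u), u⟫ t := by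
    intro t
    have h1 : HasDerivAt (fun s : ℝ => x + s • u) u t := by
      simpa using ((hasDerivAt_id t).smul_const u).const_add x
    have h2 := ((hdiff (x + t • u)).hasGradientAt.hasFDerivAt).comp_hasDerivAt t h1
    simp [InnerProductSpace.toDual_apply_apply] at h2 ⊢
    exact h2
  have hdb : ∀ t ∈ Set.Ioo (0:ℝ) 1,
      |⟪gradient f (x + t • u), u⟫ - ⟪g, u⟫| ≤ L * t * ‖u‖ ^ 2 := by
    intro t ht
    have h1 : |⟪gradient f (x + t • u) - g, u⟫|
        ≤ ‖gradient f (x + t • u) - g‖ * ‖u‖ := abs_real_inner_le_norm _ _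
    have h2 : ‖gradient f (x + t • u) - g‖ ≤ L * ‖(x + t • u) - x‖ := hlip _ _
    have h3 : ‖(x + t • u) - x‖ = t * ‖u‖ := by
      rw [add_sub_cancel_left, norm_smul, Real.norm_eq_abs, abs_of_pos ht.1]
    rw [inner_sub_left] at h1
    have hu : (0:ℝ) ≤ ‖u‖ := norm_nonneg _
    calc |⟪gradient f (x + t • u), u⟫ - ⟪g, u⟫| ≤ ‖gradient f (x + t • u) - g‖ * ‖u‖ := h1
      _ ≤ L * (t * ‖u‖) * ‖u‖ := mul_le_mul_of_nonneg_right (by rw [← h3]; exact h2) hu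
      _ = L * t * ‖u‖ ^ 2 := by ring
  have key : ∀ ε : ℝ, ε = 1 ∨ ε = -1 →
      ε * (f (x + u) - f x - ⟪g, u⟫) ≤ L / 2 * ‖u‖ ^ 2 := by
    intro ε hε
    set A : ℝ → ℝ := fun t => ε * (f (x + t • u) - ⟪g, u⟫ * t) - (L / 2 * ‖u‖ ^ 2) * t ^ 2
      with hA
    have hεabs : |ε| = 1 := by rcases hε with h | h <;> simp [h]
    have hAderiv : ∀ t : ℝ, HasDerivAt A
        (ε * (⟪gradient f (x + t • u), u⟫ - ⟪g, u⟫) - (L / 2 * ‖u‖ ^ 2) * (2 * t)) t := by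
      intro t
      have h1 : HasDerivAt (fun s : ℝ => f (x + s • u) - ⟪g, u⟫ * s)
          (⟪gradient f (x + t • u), u⟫ - ⟪g, u⟫) t := by
        have h3 := (hline t).sub ((hasDerivAt_id t).const_mul ⟪g, u⟫)
        simp at h3 ⊢
        exact h3
      have h2 : HasDerivAt (fun s : ℝ => (L / 2 * ‖u‖ ^ 2) * s ^ 2)
          ((L / 2 * ‖u‖ ^ 2) * (2 * t)) t := by
        simpa using (hasDerivAt_pow 2 t).const_mul (L / 2 * ‖u‖ ^ 2)
      exact (h1.const_mul ε).sub h2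
    have hAdiff : Differentiable ℝ A := fun t => (hAderiv t).differentiableAt
    have hmono : AntitoneOn A (Set.Icc 0 1) := by
      apply antitoneOn_of_deriv_nonpos (convex_Icc 0 1)
      · exact hAdiff.continuous.continuousOn
      · exact hAdiff.differentiableOn
      · intro t ht
        rw [interior_Icc] at ht
        rw [(hAderiv t).deriv]
        have h1 := hdb t ht
        have h2 : ε * (⟪gradient f (x + t • u), u⟫ - ⟪g, u⟫)
            ≤ |⟪gradient f (x + t • u), u⟫ - ⟪g, u⟫| := by
          calc ε * _ ≤ |ε * (⟪gradient f (x + t • u), u⟫ - ⟪g, u⟫)| := le_abs_self _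
            _ = _ := by rw [abs_mul, hεabs, one_mul]
        nlinarith
    have h01 : A 1 ≤ A 0 := hmono (by norm_num) (by norm_num) (by norm_num)
    simp only [hA, one_smul, zero_smul, add_zero, one_pow, mul_one, mul_zero, sub_zero,
      zero_pow, ne_eq] at h01
    nlinarith
  rw [abs_le]
  constructor
  · have := key (-1) (Or.inr rfl); linarith
  · have := key 1 (Or.inl rfl); linarith

theorem stmt_3 {d : ℕ} (f : EuclideanSpace ℝ (Fin d) → ℝ) (L : ℝ) (hL : 0 < L)
    (hdiff : Differentiable ℝ f)
    (hlip : ∀ x y : EuclideanSpace ℝ (Fin d),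
      ‖gradient f x - gradient f y‖ ≤ L * ‖x - y‖)
    (x : EuclideanSpace ℝ (Fin d)) (hgx : gradient f x ≠ 0) :
    Metric.closedBall (x - (‖gradient f x‖ / L) • (‖gradient f x‖⁻¹ • gradient f x))
        (‖gradient f x‖ / L) ⊆ {y | f y ≤ f x} ∧
    Metric.closedBall (x + (‖gradient f x‖ / L) • (‖gradient f x‖⁻¹ • gradient f x))
        (‖gradient f x‖ / L) ⊆ {y | f x ≤ f y} := by
  set g := gradient f x with hg
  have hG : 0 < ‖g‖ := norm_pos_iff.mpr hgx
  have hsmul : (‖g‖ / L) • (‖g‖⁻¹ • g) = (1 / L) • g := by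
    rw [smul_smul]
    congr 1
    field_simp
  have hnorm : ‖(1 / L) • g‖ = ‖g‖ / L := by
    rw [norm_smul, Real.norm_eq_abs, abs_of_pos (by positivity)]
    ring
  have hdesc : ∀ u : EuclideanSpace ℝ (Fin d),
      |f (x + u) - f x - ⟪g, u⟫| ≤ L / 2 * ‖u‖ ^ 2 :=
    fun u => descent_aux f L hL hdiff hlip x u
  constructor
  · intro y hy
    rw [Metric.mem_closedBall, dist_eq_norm, hsmul] at hy
    set u := y - x with hu
    have hyx : y = x + u := by simp [hu]
    have hexp : y - (x - (1 / L) • g) = u + (1 / L) • g := by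
      simp [hu]; abel
    rw [hexp] at hy
    have hsq : ‖u + (1 / L) • g‖ ^ 2 ≤ (‖g‖ / L) ^ 2 := by
      have := pow_le_pow_left₀ (norm_nonneg _) hy 2
      simpa using this
    rw [norm_add_sq_real, hnorm] at hsq
    have hinner : ⟪u, (1 / L) • g⟫ = (1 / L) * ⟪g, u⟫ := by
      rw [real_inner_smul_right, real_inner_comm]
    rw [hinner] at hsq
    have hib : ⟪g, u⟫ ≤ -(L / 2) * ‖u‖ ^ 2 := by
      have h' : (1 / L) * ⟪g, u⟫ ≤ -(‖u‖ ^ 2 / 2) := by linarith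
      calc ⟪g, u⟫ = L * ((1 / L) * ⟪g, u⟫) := by
            rw [one_div, mul_inv_cancel_left₀ hL.ne']
        _ ≤ L * (-(‖u‖ ^ 2 / 2)) := mul_le_mul_of_nonneg_left h' hL.le
        _ = -(L / 2) * ‖u‖ ^ 2 := by ring
    have := hdesc u
    rw [abs_le] at this
    show f y ≤ f x
    rw [hyx]
    nlinarith [this.2]
  · intro y hy
    rw [Metric.mem_closedBall, dist_eq_norm, hsmul] at hy
    set u := y - x with hu
    have hyx : y = x + u := by simp [hu]
    have hexp : y - (x + (1 / L) • g) = u - (1 / L) • g := by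
      simp [hu]; abel
    rw [hexp] at hy
    have hsq : ‖u - (1 / L) • g‖ ^ 2 ≤ (‖g‖ / L) ^ 2 := by
      have := pow_le_pow_left₀ (norm_nonneg _) hy 2
      simpa using this
    rw [norm_sub_sq_real, hnorm] at hsq
    have hinner : ⟪u, (1 / L) • g⟫ = (1 / L) * ⟪g, u⟫ := by
      rw [real_inner_smul_right, real_inner_comm]
    rw [hinner] at hsq
    have hib : (L / 2) * ‖u‖ ^ 2 ≤ ⟪g, u⟫ := by
      have h' : ‖u‖ ^ 2 / 2 ≤ (1 / L) * ⟪g, u⟫ := by linarith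
      calc (L / 2) * ‖u‖ ^ 2 = L * (‖u‖ ^ 2 / 2) := by ring
        _ ≤ L * ((1 / L) * ⟪g, u⟫) := mul_le_mul_of_nonneg_left h' hL.le
        _ = ⟪g, u⟫ := by rw [one_div, mul_inv_cancel_left₀ hL.ne']
    have := hdesc u
    rw [abs_le] at this
    show f x ≤ f y
    rw [hyx]
    nlinarith [this.1]
end

section
/- Let $\preccurlyeq$ be a convex, plateau-free, complete and transitive preference relation on $\mathbb{R}^d$ with feasible set $\mathcal{C}$ and optimal set $\mathcal{X}^\star$. Fix $x \in \mathcal{C} \setminus \mathcal{X}^\star$ with outward unit normal $n_x$ at $x \in \partial\mathcal{S}_x$, so that $\mathcal{S}_x \subseteq \{y : \langle n_x, y - x \rangle \le 0\}$. Then for any $x^\star \in \mathcal{X}^\star$, the level-set optimality gap satisfies $\Delta_{\mathrm{LS}}(x) := \mathrm{dist}(\mathcal{X}^\star, \mathcal{L}_x) \le \langle n_x, x - x^\star \rangle$. -/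
open RealInnerProductSpace

/-- Distance between two sets: `dist(A, B) = inf_{a ∈ A, b ∈ B} ‖a - b‖`,
as an extended nonnegative real. -/
noncomputable def setDist {E : Type*} [PseudoEMetricSpace E] (A B : Set E) : ENNReal :=
  ⨅ a ∈ A, ⨅ b ∈ B, edist a b

theorem stmt_9 {d : ℕ} (R : EuclideanSpace ℝ (Fin d) → EuclideanSpace ℝ (Fin d) → Prop)
    (hcomplete : ∀ x y, R x y ∨ R y x)
    (htrans : ∀ x y z, R x y → R y z → R x z)
    (hconvex : ∀ x, Convex ℝ {y | R y x})
    (C : Set (EuclideanSpace ℝ (Fin d)))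
    -- the optimal set
    (Xstar : Set (EuclideanSpace ℝ (Fin d)))
    (hXstar : Xstar = {x ∈ C | ∀ y ∈ C, R x y})
    -- plateau-freeness
    (hpf : ∀ x, x ∉ Xstar → frontier {y | R y x} = {y | R y x ∧ R x y})
    (x : EuclideanSpace ℝ (Fin d)) (hxC : x ∈ C) (hxopt : x ∉ Xstar)
    (n : EuclideanSpace ℝ (Fin d)) (hn : ‖n‖ = 1)
    (hxbd : x ∈ frontier {y | R y x})
    (hsupp : {y | R y x} ⊆ {y | ⟪n, y - x⟫ ≤ 0}) :
    ∀ xstar ∈ Xstar,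
      setDist Xstar {y | R y x ∧ R x y} ≤ ENNReal.ofReal ⟪n, x - xstar⟫ := by
  intro xstar hxs
  set S : Set (EuclideanSpace ℝ (Fin d)) := {y | R y x} with hS
  have hfront : frontier S = {y | R y x ∧ R x y} := hpf x hxopt
  -- xstar is in S
  have hxsS : xstar ∈ S := by
    rw [hXstar] at hxs
    exact hxs.2 x hxC
  -- Key: setDist is bounded by edist to any frontier point
  have hbound : ∀ w ∈ frontier S, setDist Xstar {y | R y x ∧ R x y} ≤ edist xstar w := by
    intro w hw
    rw [← hfront]
    exact iInf₂_le_of_le xstar hxs (iInf₂_le_of_le w hw le_rfl)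
  -- points with nonnegative inner product are not in the interior of S
  have hnotint : ∀ w : EuclideanSpace ℝ (Fin d), 0 ≤ ⟪n, w - x⟫ → w ∉ interior S := by
    intro w hw hint
    rcases Metric.isOpen_iff.1 isOpen_interior w hint with ⟨ε, hε, hball⟩
    have hmem : w + (ε / 2) • n ∈ Metric.ball w ε := by
      have heq : w + (ε / 2) • n - w = (ε / 2) • n := by abel
      rw [Metric.mem_ball, dist_eq_norm, heq, norm_smul, hn]
      rw [Real.norm_eq_abs, abs_of_nonneg (by linarith : (0:ℝ) ≤ ε / 2)]
      linarith
    have hle : ⟪n, w + (ε / 2) • n - x⟫ ≤ 0 := hsupp (interior_subset (hball hmem))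
    have : ⟪n, w + (ε / 2) • n - x⟫ = ⟪n, w - x⟫ + ε / 2 := by
      have : w + (ε / 2) • n - x = (w - x) + (ε / 2) • n := by abel
      rw [this, inner_add_right, real_inner_smul_right, real_inner_self_eq_norm_sq, hn]
      ring
    rw [this] at hle
    linarith
  by_cases hint : xstar ∈ interior S
  · -- xstar in interior: walk along n until hitting the frontier
    have hT : 0 < ⟪n, x - xstar⟫ := by
      by_contra h
      push_neg at h
      have : 0 ≤ ⟪n, xstar - x⟫ := by
        have := inner_sub_right (𝕜 := ℝ) n x xstar
        have h2 := inner_sub_right (𝕜 := ℝ) n xstar x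
        linarith [h, h2, this]
      exact hnotint xstar this hint
    set T : ℝ := ⟪n, x - xstar⟫ with hTdef
    set g : ℝ → EuclideanSpace ℝ (Fin d) := fun t => xstar + t • n with hg
    have hgc : Continuous g := by continuity
    set K : Set ℝ := Set.Icc 0 T ∩ g ⁻¹' (interior S)ᶜ with hK
    have hKclosed : IsClosed K :=
      isClosed_Icc.inter (isOpen_interior.isClosed_compl.preimage hgc)
    have hTK : T ∈ K := by
      refine ⟨⟨le_of_lt hT, le_refl T⟩, ?_⟩
      apply hnotint
      have : g T - x = (xstar - x) + T • n := by simp [hg]; abel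
      rw [this, inner_add_right, real_inner_smul_right, real_inner_self_eq_norm_sq, hn]
      have : ⟪n, xstar - x⟫ = -T := by
        rw [hTdef]
        have := inner_sub_right (𝕜 := ℝ) n x xstar
        have h2 := inner_sub_right (𝕜 := ℝ) n xstar x
        linarith
      rw [this]; ring_nf; simp
    have hKne : K.Nonempty := ⟨T, hTK⟩
    have hKbdd : BddBelow K := ⟨0, fun t ht => ht.1.1⟩
    set t0 := sInf K with ht0
    have ht0K : t0 ∈ K := hKclosed.csInf_mem hKne hKbdd
    have ht0nonneg : 0 ≤ t0 := ht0K.1.1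
    have ht0T : t0 ≤ T := ht0K.1.2
    have ht0pos : 0 < t0 := by
      rcases lt_or_eq_of_le ht0nonneg with h | h
      · exact h
      · exfalso
        have : g 0 ∉ interior S := by
          have := ht0K.2
          rw [← h] at this
          exact this
        apply this
        simpa [hg] using hint
    -- all t in [0, t0) give points in the interior of S
    have hIco : ∀ t ∈ Set.Ico (0:ℝ) t0, g t ∈ S := by
      intro t ht
      by_contra hgt
      have htK : t ∈ K := ⟨⟨ht.1, le_trans (le_of_lt ht.2) ht0T⟩,
        fun hc => hgt (interior_subset hc)⟩
      exact absurd (csInf_le hKbdd htK) (not_le.2 ht.2)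
    have hclos : g t0 ∈ closure S := by
      have h1 : t0 ∈ closure (Set.Ico (0:ℝ) t0) := by
        rw [closure_Ico (ne_of_lt ht0pos)]
        exact ⟨ht0nonneg, le_refl t0⟩
      have h2 : g t0 ∈ g '' closure (Set.Ico (0:ℝ) t0) := ⟨t0, h1, rfl⟩
      have h3 : g '' closure (Set.Ico (0:ℝ) t0) ⊆ closure (g '' Set.Ico (0:ℝ) t0) :=
        image_closure_subset_closure_image hgc
      have hsub : g '' Set.Ico (0:ℝ) t0 ⊆ S := by
        rintro _ ⟨t, ht, rfl⟩
        exact hIco t ht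
      exact closure_mono hsub (h3 h2)
    have hwfront : g t0 ∈ frontier S := ⟨hclos, ht0K.2⟩
    calc setDist Xstar {y | R y x ∧ R x y} ≤ edist xstar (g t0) := hbound _ hwfront
      _ = ENNReal.ofReal (dist xstar (g t0)) := edist_dist _ _
      _ ≤ ENNReal.ofReal T := by
          apply ENNReal.ofReal_le_ofReal
          rw [hg]
          simp only [dist_self_add_right, norm_smul, hn, mul_one]
          rw [Real.norm_eq_abs, abs_of_nonneg ht0nonneg]
          exact ht0T
  · -- xstar is itself on the frontier
    have hwfront : xstar ∈ frontier S := ⟨subset_closure hxsS, hint⟩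
    calc setDist Xstar {y | R y x ∧ R x y} ≤ edist xstar xstar := hbound _ hwfront
      _ = 0 := edist_self _
      _ ≤ ENNReal.ofReal ⟪n, x - xstar⟫ := zero_le
end

section
/- Let $f : \mathbb{R}^d \to \mathbb{R}$ be convex, differentiable, and $L$-smooth. Suppose there exist a minimizer $x^\star$, constants $\mu > 0$ and $\rho > 0$ such that $f$ is $\mu$-strongly convex on the ball $B(x^\star, \rho)$. Then for every $x$ with $\nabla f(x) \ne 0$: if $\|x - x^\star\| \le \rho$ then $\|\nabla f(x)\| \ge \mu \|x - x^\star\|$, and if $\|x - x^\star\| \ge \rho$ then $\|\nabla f(x)\| \ge \mu\rho$. Consequently $\|\nabla f(x)\|/L \ge \min\{(\mu/L)\,\mathrm{dist}(x, \mathcal{X}^\star),\ \mu\rho/L\}$ where $\mathcal{X}^\star$ is the set of minimizers. -/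
open RealInnerProductSpace

section Aux

variable {d : ℕ}

lemma inner_gradient_eq_fderiv (f : EuclideanSpace ℝ (Fin d) → ℝ)
    (x v : EuclideanSpace ℝ (Fin d)) :
    ⟪gradient f x, v⟫ = fderiv ℝ f x v := by
  simp [gradient, InnerProductSpace.toDual_symm_apply]

lemma first_order (f : EuclideanSpace ℝ (Fin d) → ℝ)
    (hconv : ConvexOn ℝ Set.univ f) (hdiff : Differentiable ℝ f)
    (x y : EuclideanSpace ℝ (Fin d)) :
    f x + ⟪gradient f x, y - x⟫ ≤ f y := by
  set g : ℝ → ℝ := fun t => f (x + t • (y - x)) with hg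
  have hgconv : ConvexOn ℝ Set.univ g := by
    have h := hconv.comp_affineMap (AffineMap.lineMap x y : ℝ →ᵃ[ℝ] EuclideanSpace ℝ (Fin d))
    simp only [Set.preimage_univ] at h
    have he : g = f ∘ ⇑(AffineMap.lineMap x y) := by
      funext t
      simp only [g, Function.comp_apply, AffineMap.lineMap_apply_module]
      congr 1
      module
    rw [he]
    exact h
  have hcurve : HasDerivAt (fun t : ℝ => x + t • (y - x)) (y - x) 0 := by
    simpa using ((hasDerivAt_id (0:ℝ)).smul_const (y - x)).const_add x
  have hgd : HasDerivAt g (fderiv ℝ f x (y - x)) 0 := by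
    have := (hdiff (x + (0:ℝ) • (y - x))).hasFDerivAt.comp_hasDerivAt 0 hcurve
    simp only [zero_smul, add_zero] at this
    exact this
  have hs := hgconv.le_slope_of_hasDerivAt (Set.mem_univ (0:ℝ)) (Set.mem_univ (1:ℝ))
    one_pos hgd
  rw [inner_gradient_eq_fderiv, map_sub]
  have h1 : g 1 = f y := by simp [g]
  have h0 : g 0 = f x := by simp [g]
  rw [slope_def_field] at hs
  simp [h1, h0] at hs
  linarith

lemma grad_mono (f : EuclideanSpace ℝ (Fin d) → ℝ)
    (hconv : ConvexOn ℝ Set.univ f) (hdiff : Differentiable ℝ f)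
    (x y : EuclideanSpace ℝ (Fin d)) :
    ⟪gradient f y, x - y⟫ ≤ ⟪gradient f x, x - y⟫ := by
  have h1 := first_order f hconv hdiff x y
  have h2 := first_order f hconv hdiff y x
  have e1 : ⟪gradient f x, y - x⟫ = -⟪gradient f x, x - y⟫ := by
    rw [← neg_sub x y, inner_neg_right]
  rw [e1] at h1
  linarith

end Aux

theorem stmt_13 {d : ℕ} (f : EuclideanSpace ℝ (Fin d) → ℝ)
    (hconv : ConvexOn ℝ Set.univ f)
    (hdiff : Differentiable ℝ f)
    (L : ℝ) (hL : 0 < L)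
    (hsmooth : ∀ x y : EuclideanSpace ℝ (Fin d),
      ‖gradient f x - gradient f y‖ ≤ L * ‖x - y‖)
    (xstar : EuclideanSpace ℝ (Fin d)) (hmin : ∀ y, f xstar ≤ f y)
    (μ ρ : ℝ) (hμ : 0 < μ) (hρ : 0 < ρ)
    (hsc : ∀ x ∈ Metric.closedBall xstar ρ, ∀ y ∈ Metric.closedBall xstar ρ,
      f x + ⟪gradient f x, y - x⟫ + (μ / 2) * ‖y - x‖ ^ 2 ≤ f y)
    (x : EuclideanSpace ℝ (Fin d)) (hgx : gradient f x ≠ 0) :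
    (‖x - xstar‖ ≤ ρ → μ * ‖x - xstar‖ ≤ ‖gradient f x‖) ∧
    (ρ ≤ ‖x - xstar‖ → μ * ρ ≤ ‖gradient f x‖) ∧
    min ((μ / L) * Metric.infDist x {z | ∀ y, f z ≤ f y}) (μ * ρ / L)
      ≤ ‖gradient f x‖ / L := by
  -- gradient at minimizer is zero
  have hmin' : IsLocalMin f xstar := Filter.Eventually.of_forall hmin
  have hgrad0 : gradient f xstar = 0 := by
    simp [gradient, hmin'.fderiv_eq_zero]
  have hcenter : xstar ∈ Metric.closedBall xstar ρ := Metric.mem_closedBall_self hρ.le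
  -- key strong convexity bound on the ball
  have key : ∀ z ∈ Metric.closedBall xstar ρ,
      μ * ‖z - xstar‖ ^ 2 ≤ ⟪gradient f z, z - xstar⟫ := by
    intro z hz
    have h1 := hsc z hz xstar hcenter
    have h2 := hsc xstar hcenter z hz
    have e1 : ⟪gradient f z, xstar - z⟫ = -⟪gradient f z, z - xstar⟫ := by
      rw [← neg_sub z xstar, inner_neg_right]
    have e2 : ⟪gradient f xstar, z - xstar⟫ = 0 := by rw [hgrad0, inner_zero_left]
    have e3 : ‖xstar - z‖ = ‖z - xstar‖ := norm_sub_rev _ _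
    rw [e1, e3] at h1
    rw [e2] at h2
    linarith
  -- near case
  have near : ‖x - xstar‖ ≤ ρ → μ * ‖x - xstar‖ ≤ ‖gradient f x‖ := by
    intro hxρ
    have hxball : x ∈ Metric.closedBall xstar ρ := by
      rw [Metric.mem_closedBall, dist_eq_norm]; exact hxρ
    have hk := key x hxball
    have hcs : ⟪gradient f x, x - xstar⟫ ≤ ‖gradient f x‖ * ‖x - xstar‖ :=
      real_inner_le_norm _ _
    rcases eq_or_lt_of_le (norm_nonneg (x - xstar)) with h0 | h0
    · rw [← h0, mul_zero]; exact norm_nonneg _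
    · have : μ * ‖x - xstar‖ * ‖x - xstar‖ ≤ ‖gradient f x‖ * ‖x - xstar‖ := by
        nlinarith
      exact le_of_mul_le_mul_right this h0
  -- far case
  have far : ρ ≤ ‖x - xstar‖ → μ * ρ ≤ ‖gradient f x‖ := by
    intro hρx
    rcases eq_or_lt_of_le hρx with heq | hlt
    · have := near heq.ge
      rw [← heq] at this
      exact this
    · set r := ‖x - xstar‖ with hr
      have hrpos : 0 < r := lt_trans hρ hlt
      set z : EuclideanSpace ℝ (Fin d) := xstar + (ρ / r) • (x - xstar) with hzdef
      have hzsub : z - xstar = (ρ / r) • (x - xstar) := by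
        rw [hzdef]; abel
      have hznorm : ‖z - xstar‖ = ρ := by
        rw [hzsub, norm_smul, Real.norm_eq_abs, abs_of_pos (by positivity), ← hr]
        field_simp
      have hzball : z ∈ Metric.closedBall xstar ρ := by
        rw [Metric.mem_closedBall, dist_eq_norm, hznorm]
      have hk := key z hzball
      rw [hznorm] at hk
      -- ⟪∇f z, x - xstar⟫ ≥ μ ρ r
      have hzin : ⟪gradient f z, z - xstar⟫ = (ρ / r) * ⟪gradient f z, x - xstar⟫ := by
        rw [hzsub, real_inner_smul_right]
      rw [hzin] at hk
      have hB : μ * ρ * r ≤ ⟪gradient f z, x - xstar⟫ := by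
        have h := mul_le_mul_of_nonneg_left hk (le_of_lt (by positivity : (0:ℝ) < r / ρ))
        have e : r / ρ * (ρ / r * ⟪gradient f z, x - xstar⟫) = ⟪gradient f z, x - xstar⟫ := by
          field_simp
        have e2 : r / ρ * (μ * ρ ^ 2) = μ * ρ * r := by
          field_simp
        rw [e, e2] at h
        exact h
      -- monotonicity along the ray
      have hxz : x - z = (1 - ρ / r) • (x - xstar) := by
        rw [hzdef, sub_smul, one_smul]; abel
      have hmono := grad_mono f hconv hdiff x z
      rw [hxz, real_inner_smul_right, real_inner_smul_right] at hmono
      have ht : 0 < 1 - ρ / r := by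
        rw [sub_pos, div_lt_one hrpos]; exact hlt
      have hA : ⟪gradient f z, x - xstar⟫ ≤ ⟪gradient f x, x - xstar⟫ :=
        le_of_mul_le_mul_left hmono ht
      have hcs : ⟪gradient f x, x - xstar⟫ ≤ ‖gradient f x‖ * r :=
        real_inner_le_norm _ _
      have : μ * ρ * r ≤ ‖gradient f x‖ * r := by linarith
      exact le_of_mul_le_mul_right this hrpos
  refine ⟨near, far, ?_⟩
  have hxmem : xstar ∈ {z | ∀ y, f z ≤ f y} := hmin
  have hinf : Metric.infDist x {z | ∀ y, f z ≤ f y} ≤ ‖x - xstar‖ := by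
    rw [← dist_eq_norm]
    exact Metric.infDist_le_dist_of_mem hxmem
  have hinf0 : 0 ≤ Metric.infDist x {z | ∀ y, f z ≤ f y} := Metric.infDist_nonneg
  rcases le_total ‖x - xstar‖ ρ with hle | hge
  · calc min ((μ / L) * Metric.infDist x {z | ∀ y, f z ≤ f y}) (μ * ρ / L)
        ≤ (μ / L) * Metric.infDist x {z | ∀ y, f z ≤ f y} := min_le_left _ _
      _ ≤ (μ / L) * ‖x - xstar‖ := by
          apply mul_le_mul_of_nonneg_left hinf (by positivity)
      _ = μ * ‖x - xstar‖ / L := by ring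
      _ ≤ ‖gradient f x‖ / L := by gcongr; exact near hle
  · calc min ((μ / L) * Metric.infDist x {z | ∀ y, f z ≤ f y}) (μ * ρ / L)
        ≤ μ * ρ / L := min_le_right _ _
      _ ≤ ‖gradient f x‖ / L := by gcongr; exact far hge
end

section
/- Consider the McKinnon function $f(x,y) = 360x^2 + y + y^2$ for $x \le 0$ and $f(x,y) = 6x^2 + y + y^2$ for $x \ge 0$. Then $f$ is differentiable on $\mathbb{R}^2$, globally $2$-strongly convex, globally $720$-smooth (i.e., its gradient is $720$-Lipschitz), and its unique minimizer is $(0, -1/2)$. -/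
set_option maxHeartbeats 1000000

open Set

private lemma hasDerivAt_minsq (x : ℝ) :
    HasDerivAt (fun t : ℝ => (min t 0) ^ 2) (2 * min x 0) x := by
  rcases lt_trichotomy x 0 with hx | hx | hx
  · have h : (fun t : ℝ => (min t 0) ^ 2) =ᶠ[nhds x] fun t => t ^ 2 := by
      filter_upwards [Iio_mem_nhds hx] with t ht
      rw [min_eq_left ht.le]
    have := (hasDerivAt_pow 2 x).congr_of_eventuallyEq h
    simpa [min_eq_left hx.le] using this
  · subst hx
    have h0 : HasDerivAt (fun t : ℝ => (min t 0) ^ 2) 0 0 := by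
      rw [hasDerivAt_iff_isLittleO]
      have h2 : (fun y : ℝ => y ^ 2) =o[nhds (0 : ℝ)] fun y => y - 0 := by
        simpa [hasDerivAt_iff_isLittleO] using hasDerivAt_pow 2 (0 : ℝ)
      have hO : (fun y : ℝ => (min y 0) ^ 2) =O[nhds (0 : ℝ)] fun y => y ^ 2 := by
        apply Asymptotics.IsBigO.of_bound 1
        filter_upwards with y
        have hy : |min y 0| ≤ |y| := by
          rcases le_or_gt y 0 with h | h
          · rw [min_eq_left h]
          · rw [min_eq_right h.le]; simp
        have := pow_le_pow_left₀ (abs_nonneg _) hy 2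
        simpa [abs_pow] using this
      simpa using hO.trans_isLittleO h2
    simpa using h0
  · have h : (fun t : ℝ => (min t 0) ^ 2) =ᶠ[nhds x] fun _ => (0 : ℝ) := by
      filter_upwards [Ioi_mem_nhds hx] with t ht
      rw [min_eq_right ht.le]; ring
    have := (hasDerivAt_const x (0 : ℝ)).congr_of_eventuallyEq h
    simpa [min_eq_right hx.le] using this

private lemma gfun_eq (t : ℝ) :
    (if t ≤ 0 then 360 * t ^ 2 else 6 * t ^ 2) = 6 * t ^ 2 + 354 * (min t 0) ^ 2 := by
  rcases le_or_gt t 0 with h | h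
  · rw [if_pos h, min_eq_left h]; ring
  · rw [if_neg (not_le.2 h), min_eq_right h.le]; ring

private lemma hasDerivAt_g (x : ℝ) :
    HasDerivAt (fun t : ℝ => if t ≤ 0 then 360 * t ^ 2 else 6 * t ^ 2)
      (12 * x + 708 * min x 0) x := by
  have heq : (fun t : ℝ => if t ≤ 0 then 360 * t ^ 2 else 6 * t ^ 2)
      = fun t => 6 * t ^ 2 + 354 * (min t 0) ^ 2 := funext gfun_eq
  rw [heq]
  have := ((hasDerivAt_pow 2 x).const_mul 6).add ((hasDerivAt_minsq x).const_mul 354)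
  exact this.congr_deriv (by push_cast; ring)

private lemma min_lip (a b : ℝ) : |min a 0 - min b 0| ≤ |a - b| := by
  have l : ∀ u v : ℝ, min u 0 ≤ min v 0 + |u - v| := by
    intro u v
    have hu : u ≤ v + |u - v| := by have := le_abs_self (u - v); linarith
    have h0 : (0 : ℝ) ≤ 0 + |u - v| := by positivity
    calc min u 0 ≤ min (v + |u - v|) (0 + |u - v|) := min_le_min hu h0
      _ = min v 0 + |u - v| := min_add_add_right v 0 _
  rw [abs_sub_le_iff]
  constructor
  · linarith [l a b]
  · have := l b a
    rw [abs_sub_comm b a] at this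
    linarith

private lemma key_lip (a b : ℝ) :
    |(12 * a + 708 * min a 0) - (12 * b + 708 * min b 0)| ≤ 720 * |a - b| := by
  have h1 := min_lip a b
  calc |(12 * a + 708 * min a 0) - (12 * b + 708 * min b 0)|
      = |12 * (a - b) + 708 * (min a 0 - min b 0)| := by ring_nf
    _ ≤ |12 * (a - b)| + |708 * (min a 0 - min b 0)| := abs_add_le _ _
    _ = 12 * |a - b| + 708 * |min a 0 - min b 0| := by
        rw [abs_mul, abs_mul]; norm_num
    _ ≤ 720 * |a - b| := by linarith

theorem stmt_15 (f : EuclideanSpace ℝ (Fin 2) → ℝ)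
    (hf : ∀ p : EuclideanSpace ℝ (Fin 2),
      f p = if p 0 ≤ 0 then 360 * p 0 ^ 2 + p 1 + p 1 ^ 2
            else 6 * p 0 ^ 2 + p 1 + p 1 ^ 2)
    (m : EuclideanSpace ℝ (Fin 2)) (hm0 : m 0 = 0) (hm1 : m 1 = -(1 / 2)) :
    Differentiable ℝ f ∧
    StrongConvexOn Set.univ 2 f ∧
    (∀ x y : EuclideanSpace ℝ (Fin 2), ‖gradient f x - gradient f y‖ ≤ 720 * ‖x - y‖) ∧
    (∀ y, f m ≤ f y) ∧ (∀ y, (∀ z, f y ≤ f z) → y = m) := by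
  have hfun : f = fun p => (if p 0 ≤ 0 then 360 * p 0 ^ 2 else 6 * p 0 ^ 2)
      + (p 1 + p 1 ^ 2) := by
    funext p
    rw [hf p]
    split_ifs <;> ring
  set G : EuclideanSpace ℝ (Fin 2) → EuclideanSpace ℝ (Fin 2) := fun p =>
    EuclideanSpace.single 0 (12 * p 0 + 708 * min (p 0) 0)
      + EuclideanSpace.single 1 (1 + 2 * p 1) with hGdef
  have hG : ∀ p, HasGradientAt f (G p) p := by
    intro p
    rw [hasGradientAt_iff_hasFDerivAt]
    have h1 : HasFDerivAt
        (fun q : EuclideanSpace ℝ (Fin 2) => if q 0 ≤ 0 then 360 * q 0 ^ 2 else 6 * q 0 ^ 2)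
        ((12 * p 0 + 708 * min (p 0) 0) • (EuclideanSpace.proj (0 : Fin 2) : EuclideanSpace ℝ (Fin 2) →L[ℝ] ℝ)) p := by
      have hproj : HasFDerivAt (fun q : EuclideanSpace ℝ (Fin 2) => q 0)
          ((EuclideanSpace.proj (0 : Fin 2) : EuclideanSpace ℝ (Fin 2) →L[ℝ] ℝ)) p := by
        have h := ((EuclideanSpace.proj (0 : Fin 2) : EuclideanSpace ℝ (Fin 2) →L[ℝ] ℝ)).hasFDerivAt (x := p)
        exact h.congr_of_eventuallyEq (Filter.Eventually.of_forall fun q => by simp)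
      exact (hasDerivAt_g (p 0)).comp_hasFDerivAt p hproj
    have hd2 : HasDerivAt (fun t : ℝ => t + t ^ 2) (1 + 2 * p 1) (p 1) := by
      have := (hasDerivAt_id (p 1)).add (hasDerivAt_pow 2 (p 1))
      exact this.congr_deriv (by push_cast; ring)
    have h2 : HasFDerivAt (fun q : EuclideanSpace ℝ (Fin 2) => q 1 + q 1 ^ 2)
        ((1 + 2 * p 1) • (EuclideanSpace.proj (1 : Fin 2) : EuclideanSpace ℝ (Fin 2) →L[ℝ] ℝ)) p := by
      have hproj : HasFDerivAt (fun q : EuclideanSpace ℝ (Fin 2) => q 1)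
          ((EuclideanSpace.proj (1 : Fin 2) : EuclideanSpace ℝ (Fin 2) →L[ℝ] ℝ)) p := by
        have h := ((EuclideanSpace.proj (1 : Fin 2) : EuclideanSpace ℝ (Fin 2) →L[ℝ] ℝ)).hasFDerivAt (x := p)
        exact h.congr_of_eventuallyEq (Filter.Eventually.of_forall fun q => by simp)
      exact hd2.comp_hasFDerivAt p hproj
    have hsum := h1.add h2
    rw [hfun]
    refine hsum.congr_fderiv ?_
    apply ContinuousLinearMap.ext
    intro w
    simp [hGdef, InnerProductSpace.toDual_apply_apply, inner_add_left,
      EuclideanSpace.inner_single_left]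
  have hdiff : Differentiable ℝ f := fun p => (hG p).differentiableAt
  have hgrad : ∀ p, gradient f p = G p := fun p => (hG p).gradient
  have hGapply0 : ∀ p, G p 0 = 12 * p 0 + 708 * min (p 0) 0 := by
    intro p; simp [hGdef, EuclideanSpace.single_apply]
  have hGapply1 : ∀ p, G p 1 = 1 + 2 * p 1 := by
    intro p; simp [hGdef, EuclideanSpace.single_apply]
  have hnormsq : ∀ p : EuclideanSpace ℝ (Fin 2), ‖p‖ ^ 2 = p 0 ^ 2 + p 1 ^ 2 := by
    intro p
    rw [EuclideanSpace.norm_eq, Real.sq_sqrt (by positivity)]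
    simp [Fin.sum_univ_two, sq_abs]
  refine ⟨hdiff, ?_, ?_, ?_, ?_⟩
  · rw [strongConvexOn_iff_convex]
    have heq : (fun p : EuclideanSpace ℝ (Fin 2) => f p - 2 / 2 * ‖p‖ ^ 2)
        = fun p => (5 * p 0 ^ 2 + 354 * (min (p 0) 0) ^ 2) + p 1 := by
      funext p
      rw [hf p, hnormsq p]
      rcases le_or_gt (p 0) 0 with h | h
      · rw [if_pos h, min_eq_left h]; ring
      · rw [if_neg (not_le.2 h), min_eq_right h.le]; ring
    rw [heq]
    have hH : ConvexOn ℝ univ (fun t : ℝ => 5 * t ^ 2 + 354 * (min t 0) ^ 2) := by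
      have hd : ∀ t : ℝ, HasDerivAt (fun t : ℝ => 5 * t ^ 2 + 354 * (min t 0) ^ 2)
          (10 * t + 708 * min t 0) t := by
        intro t
        have := ((hasDerivAt_pow 2 t).const_mul 5).add ((hasDerivAt_minsq t).const_mul 354)
        exact this.congr_deriv (by push_cast; ring)
      apply Monotone.convexOn_univ_of_deriv (fun t => (hd t).differentiableAt)
      intro a b hab
      rw [(hd a).deriv, (hd b).deriv]
      have := min_le_min hab (le_refl (0 : ℝ))
      linarith
    constructor
    · exact convex_univ
    · intro x _ y _ a b ha hb hab
      have key := hH.2 (mem_univ (x 0)) (mem_univ (y 0)) ha hb hab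
      simp only [smul_eq_mul] at key
      have h0 : (a • x + b • y) 0 = a * x 0 + b * y 0 := by
        simp [PiLp.add_apply, PiLp.smul_apply, smul_eq_mul]
      have h1 : (a • x + b • y) 1 = a * x 1 + b * y 1 := by
        simp [PiLp.add_apply, PiLp.smul_apply, smul_eq_mul]
      simp only [smul_eq_mul, h0, h1]
      linarith [key]
  · intro x y
    rw [hgrad x, hgrad y]
    have e0 : (G x - G y) 0 = (12 * x 0 + 708 * min (x 0) 0)
        - (12 * y 0 + 708 * min (y 0) 0) := by
      rw [PiLp.sub_apply, hGapply0, hGapply0]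
    have e1 : (G x - G y) 1 = 2 * x 1 - 2 * y 1 := by
      rw [PiLp.sub_apply, hGapply1, hGapply1]; ring
    have ex0 : (x - y) 0 = x 0 - y 0 := rfl
    have ex1 : (x - y) 1 = x 1 - y 1 := rfl
    rw [EuclideanSpace.norm_eq, EuclideanSpace.norm_eq]
    simp only [Fin.sum_univ_two, Real.norm_eq_abs, e0, e1, ex0, ex1]
    rw [show (720 : ℝ) * √(|x 0 - y 0| ^ 2 + |x 1 - y 1| ^ 2)
        = √(720 ^ 2 * (|x 0 - y 0| ^ 2 + |x 1 - y 1| ^ 2)) by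
      rw [Real.sqrt_mul (by positivity), Real.sqrt_sq (by norm_num)]]
    apply Real.sqrt_le_sqrt
    have k0 := key_lip (x 0) (y 0)
    have k1 : |2 * x 1 - 2 * y 1| ≤ 720 * |x 1 - y 1| := by
      rw [show 2 * x 1 - 2 * y 1 = 2 * (x 1 - y 1) by ring, abs_mul]
      have := abs_nonneg (x 1 - y 1)
      norm_num; linarith
    nlinarith [abs_nonneg ((12 * x 0 + 708 * min (x 0) 0) - (12 * y 0 + 708 * min (y 0) 0)),
      abs_nonneg (2 * x 1 - 2 * y 1), abs_nonneg (x 0 - y 0), abs_nonneg (x 1 - y 1),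
      sq_abs ((12 * x 0 + 708 * min (x 0) 0) - (12 * y 0 + 708 * min (y 0) 0)),
      sq_abs (2 * x 1 - 2 * y 1)]
  · intro y
    rw [hf m, hf y, hm0, hm1]
    norm_num
    split_ifs <;> nlinarith [sq_nonneg (y 1 + 1 / 2), sq_nonneg (y 0)]
  · intro y hy
    have h1 := hy m
    rw [hf m, hf y, hm0, hm1] at h1
    norm_num at h1
    have hy0 : y 0 = 0 := by
      have : y 0 ^ 2 ≤ 0 := by
        split_ifs at h1 <;> nlinarith [sq_nonneg (y 1 + 1 / 2)]
      have := le_antisymm this (sq_nonneg _)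
      exact pow_eq_zero_iff two_ne_zero |>.mp this
    have hy1 : y 1 = -(1 / 2) := by
      have h2 : (y 1 + 1 / 2) ^ 2 ≤ 0 := by
        split_ifs at h1 <;> nlinarith [sq_nonneg (y 0)]
      have h3 := le_antisymm h2 (sq_nonneg _)
      have := pow_eq_zero_iff two_ne_zero |>.mp h3
      linarith
    apply PiLp.ext
    intro i
    fin_cases i
    · show y 0 = m 0; rw [hy0, hm0]
    · show y 1 = m 1; rw [hy1, hm1]
end

section
/- Let $\mathcal{C} \subseteq \mathbb{R}^d$ be nonempty, closed, and convex, let $z \notin \mathcal{C}$, let $x := \Pi_{\mathcal{C}}(z)$ be the Euclidean projection, $s := (z - x)/\|z - x\|$, and let $\hat{n}$ be a unit vector. Define $g := \hat{n} + \max\{0, -\langle \hat{n}, s\rangle\}\, s$. Then $\|g\| \le 1$, and for every $x^\star \in \mathcal{C}$, $\langle \hat{n}, x - x^\star \rangle \le \langle g, z - x^\star \rangle$. -/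
set_option maxHeartbeats 1000000


open RealInnerProductSpace

theorem stmt_16 {d : ℕ} (C : Set (EuclideanSpace ℝ (Fin d)))
    (hne : C.Nonempty) (hclosed : IsClosed C) (hconv : Convex ℝ C)
    (z : EuclideanSpace ℝ (Fin d)) (hz : z ∉ C)
    (x : EuclideanSpace ℝ (Fin d)) (hxC : x ∈ C)
    (hproj : ∀ u ∈ C, dist z x ≤ dist z u)
    (nhat : EuclideanSpace ℝ (Fin d)) (hn : ‖nhat‖ = 1) :
    ‖nhat + max 0 (-⟪nhat, ‖z - x‖⁻¹ • (z - x)⟫) • (‖z - x‖⁻¹ • (z - x))‖ ≤ 1 ∧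
    ∀ xstar ∈ C,
      ⟪nhat, x - xstar⟫ ≤
        ⟪nhat + max 0 (-⟪nhat, ‖z - x‖⁻¹ • (z - x)⟫) • (‖z - x‖⁻¹ • (z - x)),
          z - xstar⟫ := by
  have hzx : z ≠ x := fun h => hz (h ▸ hxC)
  have hr : (0:ℝ) < ‖z - x‖ := by rwa [norm_pos_iff, sub_ne_zero]
  set s : EuclideanSpace ℝ (Fin d) := ‖z - x‖⁻¹ • (z - x) with hs
  have hsnorm : ‖s‖ = 1 := by
    rw [hs, norm_smul, norm_inv, norm_norm, inv_mul_cancel₀ hr.ne']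
  set a : ℝ := ⟪nhat, s⟫ with ha
  set c : ℝ := max 0 (-a) with hc
  have hc0 : 0 ≤ c := le_max_left _ _
  have hca : 0 ≤ a + c := by
    rcases le_or_gt 0 a with h | h
    · linarith
    · have : c = -a := max_eq_right (by linarith)
      linarith
  have hcc : c * (a + c) + c * a ≤ 0 := by
    rcases le_or_gt 0 a with h | h
    · have : c = 0 := max_eq_left (by linarith)
      simp [this]
    · have : c = -a := max_eq_right (by linarith)
      nlinarith
  haveI : Nonempty C := hne.to_subtype
  have hkey : ∀ w ∈ C, ⟪z - x, w - x⟫ ≤ 0 := by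
    intro w hw
    have hstep : ∀ t : ℝ, 0 ≤ t → t ≤ 1 →
        2 * t * ⟪z - x, w - x⟫ ≤ t ^ 2 * ‖w - x‖ ^ 2 := by
      intro t ht0 ht1
      have hmem : x + t • (w - x) ∈ C := by
        have h' := hconv hxC hw (by linarith : (0:ℝ) ≤ 1 - t) ht0 (by ring)
        convert h' using 1
        module
      have hle := hproj _ hmem
      rw [dist_eq_norm, dist_eq_norm] at hle
      have hexp : z - (x + t • (w - x)) = (z - x) - t • (w - x) := by module
      have h2 : ‖z - x‖ ^ 2 ≤ ‖(z - x) - t • (w - x)‖ ^ 2 := by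
        rw [← hexp]; nlinarith [norm_nonneg (z - x)]
      have hnorm : ‖(z - x) - t • (w - x)‖ ^ 2
          = ‖z - x‖ ^ 2 - 2 * (t * ⟪z - x, w - x⟫) + t ^ 2 * ‖w - x‖ ^ 2 := by
        rw [norm_sub_sq_real, real_inner_smul_right, norm_smul,
          Real.norm_eq_abs, abs_of_nonneg ht0]
        ring
      rw [hnorm] at h2
      linarith
    by_contra hcon
    push_neg at hcon
    have hwx : (0:ℝ) < ‖w - x‖ ^ 2 := by
      rcases eq_or_ne w x with rfl | hne'
      · simp at hcon
      · have : w - x ≠ 0 := sub_ne_zero.mpr hne'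
        have := norm_pos_iff.mpr this
        positivity
    set I : ℝ := ⟪z - x, w - x⟫ with hI
    set t : ℝ := min 1 (I / ‖w - x‖ ^ 2) with ht
    have ht0 : 0 < t := lt_min one_pos (div_pos hcon hwx)
    have ht1 : t ≤ 1 := min_le_left _ _
    have htb : t * ‖w - x‖ ^ 2 ≤ I := by
      have h' : t ≤ I / ‖w - x‖ ^ 2 := min_le_right _ _
      calc t * ‖w - x‖ ^ 2 ≤ (I / ‖w - x‖ ^ 2) * ‖w - x‖ ^ 2 := by
            exact mul_le_mul_of_nonneg_right h' hwx.le
        _ = I := by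
          have h0 : ‖w - x‖ ≠ 0 := fun h0 => by simp [h0] at hwx
          field_simp
    have := hstep t ht0.le ht1
    nlinarith [mul_pos ht0 hcon]
  constructor
  · have hnormsq : ‖nhat + c • s‖ ^ 2 = 1 + (2 * (c * a) + c ^ 2) := by
      rw [norm_add_sq_real, real_inner_smul_right, norm_smul, hn, hsnorm, ← ha]
      simp [abs_of_nonneg hc0]
      ring
    have h2 : ‖nhat + c • s‖ ^ 2 ≤ 1 := by
      rw [hnormsq]; nlinarith
    nlinarith [norm_nonneg (nhat + c • s)]
  · intro xstar hxs
    have h1 : 0 ≤ ⟪s, x - xstar⟫ := by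
      have := hkey xstar hxs
      have heq : ⟪s, x - xstar⟫ = ‖z - x‖⁻¹ * -⟪z - x, xstar - x⟫ := by
        rw [hs, real_inner_smul_left]
        congr 1
        rw [← inner_neg_right, neg_sub]
      rw [heq]
      have : 0 ≤ -⟪z - x, xstar - x⟫ := by linarith
      positivity
    have h2 : z - xstar = ‖z - x‖ • s + (x - xstar) := by
      rw [hs, smul_inv_smul₀ hr.ne']
      abel
    have hss : ⟪s, s⟫ = (1:ℝ) := by
      rw [real_inner_self_eq_norm_sq, hsnorm]; norm_num
    have hgz : ⟪nhat + c • s, z - xstar⟫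
        = ‖z - x‖ * (a + c) + ⟪nhat, x - xstar⟫ + c * ⟪s, x - xstar⟫ := by
      rw [h2]
      simp only [inner_add_left, inner_add_right, real_inner_smul_left,
        real_inner_smul_right, hss, ← ha]
      ring
    rw [hgz]
    nlinarith [mul_nonneg hc0 h1, mul_nonneg hr.le hca]
end

section
/- Let $h(x) := \max_{1 \le i \le d} x_i$ on $\mathbb{R}^d$, let $\rho : \mathbb{R}^d \to \mathbb{R}$ be a nonnegative smooth probability density supported in $\{z : 0 < z_d < z_{d-1} < \cdots < z_1 < \chi\}$ for some $\chi > 0$, and define $f(x) := \int h(x+z)\rho(z)\,dz$. Then: (a) $f$ is convex and $1$-Lipschitz; (b) $\nabla f(x)$ lies in the convex hull of $\{e_1, \dots, e_d\}$ for all $x$, hence $1/\sqrt{d} \le \|\nabla f(x)\| \le 1$; (c) if $x_r = x_{r+1} = \cdots = x_d = 0$ for some $r < d$, then $(\nabla f(x))_j = 0$ for all $j > r$. -/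
open MeasureTheory

noncomputable def maxCoord {d : ℕ} (hd : 0 < d) (x : EuclideanSpace ℝ (Fin d)) : ℝ :=
  Finset.univ.sup' ⟨⟨0, hd⟩, Finset.mem_univ _⟩ (fun i => x i)

noncomputable def allOnes (d : ℕ) : EuclideanSpace ℝ (Fin d) := WithLp.toLp 2 (fun _ => 1)

variable {d : ℕ} (hd : 0 < d)

lemma le_maxCoord (x : EuclideanSpace ℝ (Fin d)) (i : Fin d) : x i ≤ maxCoord hd x :=
  Finset.le_sup' _ (Finset.mem_univ i)

lemma maxCoord_le {x : EuclideanSpace ℝ (Fin d)} {a : ℝ} (h : ∀ i, x i ≤ a) :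
    maxCoord hd x ≤ a :=
  Finset.sup'_le _ _ fun i _ => h i

lemma abs_coord_le (x : EuclideanSpace ℝ (Fin d)) (i : Fin d) : |x i| ≤ ‖x‖ := by
  have h := abs_real_inner_le_norm x (EuclideanSpace.single i (1:ℝ))
  rw [EuclideanSpace.inner_single_right] at h
  simpa using h

lemma maxCoord_sub_le (x y : EuclideanSpace ℝ (Fin d)) :
    maxCoord hd x ≤ maxCoord hd y + ‖x - y‖ := by
  apply maxCoord_le
  intro i
  have h1 := (abs_le.1 (abs_coord_le (x - y) i)).2
  have h2 := le_maxCoord hd y i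
  simp only [PiLp.sub_apply] at h1
  linarith

lemma maxCoord_lipschitz : LipschitzWith 1 (maxCoord hd) := by
  apply LipschitzWith.of_dist_le_mul
  intro x y
  rw [NNReal.coe_one, one_mul, Real.dist_eq, dist_eq_norm, abs_sub_le_iff]
  refine ⟨?_, ?_⟩
  · have := maxCoord_sub_le hd x y; linarith
  · have := maxCoord_sub_le hd y x; rw [norm_sub_rev] at this; linarith

lemma maxCoord_continuous : Continuous (maxCoord hd) := (maxCoord_lipschitz hd).continuous

lemma maxCoord_add_smul_ones (x : EuclideanSpace ℝ (Fin d)) (t : ℝ) :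
    maxCoord hd (x + t • allOnes d) = maxCoord hd x + t := by
  apply le_antisymm
  · apply maxCoord_le
    intro i
    have := le_maxCoord hd x i
    simp only [PiLp.add_apply, PiLp.smul_apply, allOnes, PiLp.toLp_apply, smul_eq_mul, mul_one]
    linarith
  · have hle : maxCoord hd x ≤ maxCoord hd (x + t • allOnes d) - t := by
      apply maxCoord_le
      intro i
      have hh := le_maxCoord hd (x + t • allOnes d) i
      simp only [PiLp.add_apply, PiLp.smul_apply, allOnes, PiLp.toLp_apply, smul_eq_mul, mul_one] at hh
      exact le_sub_iff_add_le.mpr hh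
    linarith

-- convexity pointwise
lemma maxCoord_convexOn : ConvexOn ℝ Set.univ (maxCoord hd) := by
  refine ⟨convex_univ, fun x _ y _ a b ha hb hab => ?_⟩
  apply maxCoord_le
  intro i
  simp only [PiLp.add_apply, PiLp.smul_apply, smul_eq_mul]
  have h1 := le_maxCoord hd x i
  have h2 := le_maxCoord hd y i
  nlinarith

lemma maxCoord_add_single_le (x : EuclideanSpace ℝ (Fin d)) (j : Fin d) (t : ℝ) :
    maxCoord hd (x + t • EuclideanSpace.single j (1:ℝ)) ≤ Max.max (maxCoord hd x) (x j + t) := by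
  apply maxCoord_le
  intro i
  simp only [PiLp.add_apply, PiLp.smul_apply, EuclideanSpace.single_apply, smul_eq_mul]
  by_cases hij : i = j
  · subst hij; norm_num
  · simp only [if_neg hij, mul_zero, add_zero]
    exact le_trans (le_maxCoord hd x i) (le_max_left (maxCoord hd x) (x j + t))

lemma maxCoord_mono_single (x : EuclideanSpace ℝ (Fin d)) (j : Fin d) {t : ℝ} (ht : 0 ≤ t) :
    maxCoord hd x ≤ maxCoord hd (x + t • EuclideanSpace.single j (1:ℝ)) := by
  apply maxCoord_le
  intro i
  refine le_trans ?_ (le_maxCoord hd _ i)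
  simp only [PiLp.add_apply, PiLp.smul_apply, EuclideanSpace.single_apply, smul_eq_mul]
  by_cases hij : i = j
  · subst hij; norm_num; linarith
  · simp [if_neg hij]

section Supp

variable {χ : ℝ} {ρ : EuclideanSpace ℝ (Fin d) → ℝ}

lemma supp_coord (hρsupp : ∀ z, ρ z ≠ 0 →
      (0 < z ⟨d - 1, Nat.sub_lt hd one_pos⟩ ∧
        (∀ i j : Fin d, i < j → z j < z i) ∧ z ⟨0, hd⟩ < χ))
    {z : EuclideanSpace ℝ (Fin d)} (hz : ρ z ≠ 0) (i : Fin d) : 0 < z i ∧ z i < χ := by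
  obtain ⟨h1, h2, h3⟩ := hρsupp z hz
  constructor
  · rcases eq_or_lt_of_le (show i ≤ ⟨d - 1, Nat.sub_lt hd one_pos⟩ by
      simp only [Fin.le_def, Fin.val_mk]; omega) with h | h
    · rw [h]; exact h1
    · exact lt_trans h1 (h2 i _ h)
  · rcases eq_or_lt_of_le (show (⟨0, hd⟩ : Fin d) ≤ i by simp only [Fin.le_def, Fin.val_mk]; omega) with h | h
    · rw [← h]; exact h3
    · exact lt_trans (h2 _ i h) h3

lemma supp_compact (hχ : 0 < χ) (hρsupp : ∀ z, ρ z ≠ 0 →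
      (0 < z ⟨d - 1, Nat.sub_lt hd one_pos⟩ ∧
        (∀ i j : Fin d, i < j → z j < z i) ∧ z ⟨0, hd⟩ < χ)) :
    HasCompactSupport ρ := by
  apply HasCompactSupport.intro (isCompact_closedBall (0 : EuclideanSpace ℝ (Fin d))
    (Real.sqrt (d * χ ^ 2)))
  intro z hz
  by_contra h
  apply hz
  rw [Metric.mem_closedBall, dist_zero_right, EuclideanSpace.norm_eq]
  apply Real.sqrt_le_sqrt
  calc (∑ i, ‖z i‖ ^ 2) ≤ ∑ _i : Fin d, χ ^ 2 := by
        apply Finset.sum_le_sum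
        intro i _
        have := supp_coord hd hρsupp h i
        rw [Real.norm_eq_abs, abs_of_pos this.1]
        nlinarith [this.1, this.2]
    _ = d * χ ^ 2 := by simp [Finset.sum_const, mul_comm]

lemma ρ_integrable_mul (hχ : 0 < χ) (hρsmooth : ContDiff ℝ (⊤ : ℕ∞) ρ)
    (hρsupp : ∀ z, ρ z ≠ 0 →
      (0 < z ⟨d - 1, Nat.sub_lt hd one_pos⟩ ∧
        (∀ i j : Fin d, i < j → z j < z i) ∧ z ⟨0, hd⟩ < χ))
    {F : EuclideanSpace ℝ (Fin d) → ℝ} (hF : Continuous F) :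
    Integrable (fun z => F z * ρ z) := by
  apply Continuous.integrable_of_hasCompactSupport (hF.mul hρsmooth.continuous)
  exact (supp_compact hd hχ hρsupp).mul_left

end Supp

open scoped Convolution

lemma f_smooth {χ : ℝ} {ρ : EuclideanSpace ℝ (Fin d) → ℝ} (hχ : 0 < χ)
    (hρsmooth : ContDiff ℝ (⊤ : ℕ∞) ρ)
    (hρsupp : ∀ z, ρ z ≠ 0 →
      (0 < z ⟨d - 1, Nat.sub_lt hd one_pos⟩ ∧
        (∀ i j : Fin d, i < j → z j < z i) ∧ z ⟨0, hd⟩ < χ))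
    {f : EuclideanSpace ℝ (Fin d) → ℝ}
    (hf : ∀ x, f x = ∫ z, maxCoord hd (x + z) * ρ z) :
    Differentiable ℝ f := by
  have hg : ContDiff ℝ (⊤ : ℕ∞) (fun t : EuclideanSpace ℝ (Fin d) => ρ (-t)) :=
    hρsmooth.comp contDiff_neg
  have hgc : HasCompactSupport (fun t : EuclideanSpace ℝ (Fin d) => ρ (-t)) :=
    (supp_compact hd hχ hρsupp).comp_homeomorph (Homeomorph.neg _)
  have hloc : LocallyIntegrable (maxCoord hd) volume :=
    (maxCoord_continuous hd).locallyIntegrable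
  have hconv : f = (fun t => ρ (-t)) ⋆[ContinuousLinearMap.lsmul ℝ ℝ, volume] (maxCoord hd) := by
    funext x
    rw [hf x, convolution_def]
    simp only [ContinuousLinearMap.lsmul_apply]
    rw [← MeasureTheory.integral_neg_eq_self
      (fun t => ρ (-t) • maxCoord hd (x - t)) volume]
    congr 1
    funext z
    simp [mul_comm, sub_neg_eq_add]
  rw [hconv]
  exact (hgc.contDiff_convolution_left (n := (⊤ : ℕ∞)) _ (hg.of_le (by simp))
    hloc).differentiable (by simp)

section FLemmas

variable {χ : ℝ} {ρ : EuclideanSpace ℝ (Fin d) → ℝ} {f : EuclideanSpace ℝ (Fin d) → ℝ}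

lemma integ_max (hχ : 0 < χ) (hρsmooth : ContDiff ℝ (⊤ : ℕ∞) ρ)
    (hρsupp : ∀ z, ρ z ≠ 0 →
      (0 < z ⟨d - 1, Nat.sub_lt hd one_pos⟩ ∧
        (∀ i j : Fin d, i < j → z j < z i) ∧ z ⟨0, hd⟩ < χ))
    (x : EuclideanSpace ℝ (Fin d)) :
    Integrable (fun z => maxCoord hd (x + z) * ρ z) :=
  ρ_integrable_mul hd hχ hρsmooth hρsupp
    ((maxCoord_continuous hd).comp (continuous_const.add continuous_id))

lemma f_mono_single (hχ : 0 < χ) (hρsmooth : ContDiff ℝ (⊤ : ℕ∞) ρ) (hρnn : ∀ z, 0 ≤ ρ z)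
    (hρsupp : ∀ z, ρ z ≠ 0 →
      (0 < z ⟨d - 1, Nat.sub_lt hd one_pos⟩ ∧
        (∀ i j : Fin d, i < j → z j < z i) ∧ z ⟨0, hd⟩ < χ))
    (hf : ∀ x, f x = ∫ z, maxCoord hd (x + z) * ρ z)
    (x : EuclideanSpace ℝ (Fin d)) (j : Fin d) {t : ℝ} (ht : 0 ≤ t) :
    f x ≤ f (x + t • EuclideanSpace.single j (1:ℝ)) := by
  rw [hf x, hf _]
  apply integral_mono (integ_max hd hχ hρsmooth hρsupp x) (integ_max hd hχ hρsmooth hρsupp _)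
  intro z
  apply mul_le_mul_of_nonneg_right _ (hρnn z)
  have := maxCoord_mono_single hd (x + z) j ht
  rwa [add_right_comm] at this

lemma f_lipschitz (hχ : 0 < χ) (hρsmooth : ContDiff ℝ (⊤ : ℕ∞) ρ) (hρnn : ∀ z, 0 ≤ ρ z)
    (hρint : ∫ z, ρ z = 1)
    (hρsupp : ∀ z, ρ z ≠ 0 →
      (0 < z ⟨d - 1, Nat.sub_lt hd one_pos⟩ ∧
        (∀ i j : Fin d, i < j → z j < z i) ∧ z ⟨0, hd⟩ < χ))
    (hf : ∀ x, f x = ∫ z, maxCoord hd (x + z) * ρ z) :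
    LipschitzWith 1 f := by
  have key : ∀ x y : EuclideanSpace ℝ (Fin d), f x ≤ f y + ‖x - y‖ := by
    intro x y
    rw [hf x, hf y]
    have h1 : Integrable (fun z => (maxCoord hd (y + z) + ‖x - y‖) * ρ z) :=
      ρ_integrable_mul hd hχ hρsmooth hρsupp
        (((maxCoord_continuous hd).comp (continuous_const.add continuous_id)).add
          continuous_const)
    have h2 := integral_mono (integ_max hd hχ hρsmooth hρsupp x) h1 (fun z => by
      apply mul_le_mul_of_nonneg_right _ (hρnn z)
      have := maxCoord_sub_le hd (x + z) (y + z)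
      simpa using this)
    calc (∫ z, maxCoord hd (x + z) * ρ z) ≤ ∫ z, (maxCoord hd (y + z) + ‖x - y‖) * ρ z := h2
      _ = (∫ z, maxCoord hd (y + z) * ρ z) + ‖x - y‖ := by
          simp_rw [add_mul]
          rw [integral_add (integ_max hd hχ hρsmooth hρsupp y)
            (by simpa using (ρ_integrable_mul hd hχ hρsmooth hρsupp
              (continuous_const : Continuous (fun _ => ‖x - y‖))))]
          rw [MeasureTheory.integral_const_mul, hρint, mul_one]
  apply LipschitzWith.of_dist_le_mul
  intro x y
  rw [NNReal.coe_one, one_mul, Real.dist_eq, dist_eq_norm, abs_sub_le_iff]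
  constructor
  · have := key x y; linarith
  · have := key y x; rw [norm_sub_rev] at this; linarith

lemma f_convex (hχ : 0 < χ) (hρsmooth : ContDiff ℝ (⊤ : ℕ∞) ρ) (hρnn : ∀ z, 0 ≤ ρ z)
    (hρsupp : ∀ z, ρ z ≠ 0 →
      (0 < z ⟨d - 1, Nat.sub_lt hd one_pos⟩ ∧
        (∀ i j : Fin d, i < j → z j < z i) ∧ z ⟨0, hd⟩ < χ))
    (hf : ∀ x, f x = ∫ z, maxCoord hd (x + z) * ρ z) :
    ConvexOn ℝ Set.univ f := by
  refine ⟨convex_univ, fun x _ y _ a b ha hb hab => ?_⟩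
  rw [hf _, hf x, hf y]
  have h1 : Integrable (fun z => (a * maxCoord hd (x + z) + b * maxCoord hd (y + z)) * ρ z) :=
    ρ_integrable_mul hd hχ hρsmooth hρsupp
      (((continuous_const.mul ((maxCoord_continuous hd).comp
        (continuous_const.add continuous_id))).add
        (continuous_const.mul ((maxCoord_continuous hd).comp
          (continuous_const.add continuous_id)))))
  have hle : ∀ z, maxCoord hd (a • x + b • y + z) * ρ z
      ≤ (a * maxCoord hd (x + z) + b * maxCoord hd (y + z)) * ρ z := by
    intro z
    apply mul_le_mul_of_nonneg_right _ (hρnn z)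
    have heq : a • x + b • y + z = a • (x + z) + b • (y + z) := by
      rw [smul_add, smul_add]
      have hz : a • z + b • z = z := by
        rw [← add_smul, hab, one_smul]
      rw [add_add_add_comm, hz]
    rw [heq]
    exact (maxCoord_convexOn hd).2 (Set.mem_univ (x+z)) (Set.mem_univ (y+z)) ha hb hab
  have h2 := integral_mono (integ_max hd hχ hρsmooth hρsupp _) h1 hle
  calc (∫ z, maxCoord hd (a • x + b • y + z) * ρ z)
      ≤ ∫ z, (a * maxCoord hd (x + z) + b * maxCoord hd (y + z)) * ρ z := h2
    _ = a • (∫ z, maxCoord hd (x + z) * ρ z) + b • (∫ z, maxCoord hd (y + z) * ρ z) := by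
        simp_rw [add_mul, mul_assoc]
        rw [integral_add ((integ_max hd hχ hρsmooth hρsupp x).const_mul a)
          ((integ_max hd hχ hρsmooth hρsupp y).const_mul b),
          MeasureTheory.integral_const_mul, MeasureTheory.integral_const_mul]
        simp [smul_eq_mul]

lemma f_add_ones (hχ : 0 < χ) (hρsmooth : ContDiff ℝ (⊤ : ℕ∞) ρ)
    (hρint : ∫ z, ρ z = 1)
    (hρsupp : ∀ z, ρ z ≠ 0 →
      (0 < z ⟨d - 1, Nat.sub_lt hd one_pos⟩ ∧
        (∀ i j : Fin d, i < j → z j < z i) ∧ z ⟨0, hd⟩ < χ))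
    (hf : ∀ x, f x = ∫ z, maxCoord hd (x + z) * ρ z)
    (x : EuclideanSpace ℝ (Fin d)) (t : ℝ) :
    f (x + t • allOnes d) = f x + t := by
  rw [hf _, hf x]
  have heq : ∀ z, maxCoord hd (x + t • allOnes d + z) * ρ z
      = maxCoord hd (x + z) * ρ z + t * ρ z := by
    intro z
    rw [add_right_comm, maxCoord_add_smul_ones hd (x + z) t, add_mul]
  simp_rw [heq]
  rw [integral_add (integ_max hd hχ hρsmooth hρsupp x)
    (by simpa using (ρ_integrable_mul hd hχ hρsmooth hρsupp
      (continuous_const : Continuous (fun _ => t)))),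
    MeasureTheory.integral_const_mul, hρint, mul_one]

end FLemmas

section Grad

lemma inner_gradient (f : EuclideanSpace ℝ (Fin d) → ℝ) (x v : EuclideanSpace ℝ (Fin d)) :
    (inner ℝ (gradient f x) v : ℝ) = fderiv ℝ f x v := by
  rw [gradient]
  exact InnerProductSpace.toDual_symm_apply

lemma gradient_component (f : EuclideanSpace ℝ (Fin d) → ℝ) (x : EuclideanSpace ℝ (Fin d))
    (j : Fin d) : gradient f x j = fderiv ℝ f x (EuclideanSpace.single j (1:ℝ)) := by
  have h := inner_gradient f x (EuclideanSpace.single j (1:ℝ))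
  rw [EuclideanSpace.inner_single_right] at h
  simpa using h

lemma hasDerivAt_dir {f : EuclideanSpace ℝ (Fin d) → ℝ} (hdiff : Differentiable ℝ f)
    (x v : EuclideanSpace ℝ (Fin d)) :
    HasDerivAt (fun t : ℝ => f (x + t • v)) (fderiv ℝ f x v) 0 := by
  have h2 : HasDerivAt (fun t : ℝ => x + t • v) v 0 := by
    simpa using ((hasDerivAt_id (0:ℝ)).smul_const v).const_add x
  have h1 : HasFDerivAt f (fderiv ℝ f x) (x + (0:ℝ) • v) := by
    simpa using (hdiff x).hasFDerivAt
  exact h1.comp_hasDerivAt 0 h2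

lemma tendsto_slope_right {g : ℝ → ℝ} {c : ℝ} (h : HasDerivAt g c 0) :
    Filter.Tendsto (fun t => (g t - g 0) / t) (nhdsWithin 0 (Set.Ioi 0)) (nhds c) := by
  have h1 := hasDerivAt_iff_tendsto_slope.1 h
  have h2 := h1.mono_left (nhdsWithin_mono 0 (fun y (hy : y ∈ Set.Ioi 0) => ne_of_gt hy))
  apply h2.congr
  intro t
  rw [slope_def_field]
  simp

lemma norm_allOnes : ‖allOnes d‖ = Real.sqrt d := by
  rw [EuclideanSpace.norm_eq]
  congr 1
  simp [allOnes]

lemma sum_single_eq_allOnes : (∑ i : Fin d, EuclideanSpace.single i (1:ℝ)) = allOnes d := by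
  ext j
  have : (∑ i : Fin d, EuclideanSpace.single i (1:ℝ)) j
      = ∑ i : Fin d, EuclideanSpace.single i (1:ℝ) j := by
    rw [WithLp.ofLp_sum]; exact Finset.sum_apply j Finset.univ _
  rw [this]
  simp [EuclideanSpace.single_apply, allOnes]

end Grad

section PartC

variable {χ : ℝ} {ρ f : EuclideanSpace ℝ (Fin d) → ℝ}

lemma grad_zero_core (hχ : 0 < χ) (hρsmooth : ContDiff ℝ (⊤ : ℕ∞) ρ) (hρnn : ∀ z, 0 ≤ ρ z)
    (hρsupp' : ∀ z, ρ z ≠ 0 →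
      (0 < z ⟨d - 1, Nat.sub_lt hd one_pos⟩ ∧
        (∀ i j : Fin d, i < j → z j < z i) ∧ z ⟨0, hd⟩ < χ))
    (hf : ∀ x, f x = ∫ z, maxCoord hd (x + z) * ρ z)
    (hdiff : Differentiable ℝ f)
    (x : EuclideanSpace ℝ (Fin d)) (r : Fin d) (hx : ∀ j, r ≤ j → x j = 0)
    (j : Fin d) (hrj : r < j) :
    fderiv ℝ f x (EuclideanSpace.single j (1:ℝ)) = 0 := by
  have hxj : x j = 0 := hx j (le_of_lt hrj)
  have hxr : x r = 0 := hx r (le_refl r)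
  set v := EuclideanSpace.single j (1:ℝ) with hv
  have hder := hasDerivAt_dir hdiff x v
  have hslope := tendsto_slope_right hder
  have hge : 0 ≤ fderiv ℝ f x v := by
    refine ge_of_tendsto hslope
      (Filter.eventually_of_mem self_mem_nhdsWithin fun t (ht : (0:ℝ) < t) => ?_)
    have hm := f_mono_single hd hχ hρsmooth hρnn hρsupp' hf x j (le_of_lt ht)
    have hg0 : f (x + (0:ℝ) • v) = f x := by rw [zero_smul, add_zero]
    simp only [hg0]
    exact div_nonneg (by rw [hv]; linarith) (le_of_lt ht)
  have hle : fderiv ℝ f x v ≤ 0 := by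
    set F : ℝ → EuclideanSpace ℝ (Fin d) → ℝ :=
      fun t z => (max 0 (z j + t - z r) * ρ z) / t with hF
    have hcontmax : ∀ t : ℝ, Continuous (fun z : EuclideanSpace ℝ (Fin d) =>
        max 0 (z j + t - z r)) := fun t =>
      continuous_const.max (((EuclideanSpace.proj j).continuous.add continuous_const).sub
        (EuclideanSpace.proj (𝕜 := ℝ) r).continuous)
    have hbound : ∀ t : ℝ, 0 < t → (f (x + t • v) - f x) / t ≤ ∫ z, F t z := by
      intro t ht
      have hint2 : Integrable (fun z => (maxCoord hd (x + z) + max 0 (z j + t - z r)) * ρ z) :=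
        ρ_integrable_mul hd hχ hρsmooth hρsupp'
          (((maxCoord_continuous hd).comp (continuous_const.add continuous_id)).add
            (hcontmax t))
      have hle2 : ∀ z, maxCoord hd ((x + t • v) + z) * ρ z
          ≤ (maxCoord hd (x + z) + max 0 (z j + t - z r)) * ρ z := by
        intro z
        by_cases hz : ρ z = 0
        · rw [hz]; simp
        · apply mul_le_mul_of_nonneg_right _ (hρnn z)
          have hA := maxCoord_add_single_le hd (x + z) j t
          rw [add_right_comm] at hA
          have hBr : z r ≤ maxCoord hd (x + z) := by
            have := le_maxCoord hd (x + z) r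
            simpa [PiLp.add_apply, hxr] using this
          have hzj : (x + z) j = z j := by simp [PiLp.add_apply, hxj]
          rw [hzj] at hA
          refine le_trans hA (max_le (le_add_of_nonneg_right (le_max_left 0 _)) ?_)
          have := le_max_right 0 (z j + t - z r)
          linarith
      have hIineq : f (x + t • v) ≤ f x + ∫ z, max 0 (z j + t - z r) * ρ z := by
        rw [hf (x + t • v), hf x]
        have h2 := integral_mono (integ_max hd hχ hρsmooth hρsupp' _) hint2 hle2
        calc (∫ z, maxCoord hd ((x + t • v) + z) * ρ z)
            ≤ ∫ z, (maxCoord hd (x + z) + max 0 (z j + t - z r)) * ρ z := h2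
          _ = (∫ z, maxCoord hd (x + z) * ρ z) + ∫ z, max 0 (z j + t - z r) * ρ z := by
              simp_rw [add_mul]
              rw [integral_add (integ_max hd hχ hρsmooth hρsupp' x)
                (ρ_integrable_mul hd hχ hρsmooth hρsupp' (hcontmax t))]
      calc (f (x + t • v) - f x) / t ≤ (∫ z, max 0 (z j + t - z r) * ρ z) / t := by
            refine (div_le_div_iff_of_pos_right ht).2 ?_
            linarith
        _ = ∫ z, F t z := by rw [← integral_div]
    have hFlim : Filter.Tendsto (fun t => ∫ z, F t z) (nhdsWithin 0 (Set.Ioi 0))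
        (nhds (∫ _ : EuclideanSpace ℝ (Fin d), (0:ℝ))) := by
      apply MeasureTheory.tendsto_integral_filter_of_dominated_convergence (bound := ρ)
      · refine Filter.Eventually.of_forall fun t => ?_
        exact (((hcontmax t).mul hρsmooth.continuous).div_const t).aestronglyMeasurable
      · refine Filter.eventually_of_mem self_mem_nhdsWithin fun t (ht : (0:ℝ) < t) => ?_
        refine Filter.Eventually.of_forall fun z => ?_
        by_cases hz : ρ z = 0
        · simp [F, hz, hρnn z]
        · have hjr : z j < z r := (hρsupp' z hz).2.1 r j hrj
          have h1 : max 0 (z j + t - z r) ≤ t := max_le ht.le (by linarith)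
          have h2 : (0:ℝ) ≤ max 0 (z j + t - z r) := le_max_left 0 _
          rw [Real.norm_eq_abs, abs_of_nonneg (div_nonneg (mul_nonneg h2 (hρnn z)) ht.le)]
          rw [div_le_iff₀ ht]
          calc max 0 (z j + t - z r) * ρ z ≤ t * ρ z :=
                mul_le_mul_of_nonneg_right h1 (hρnn z)
            _ = ρ z * t := mul_comm _ _
      · simpa using ρ_integrable_mul hd hχ hρsmooth hρsupp'
          (continuous_const : Continuous (fun _ : EuclideanSpace ℝ (Fin d) => (1:ℝ)))
      · refine Filter.Eventually.of_forall fun z => ?_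
        by_cases hz : ρ z = 0
        · simpa [F, hz] using tendsto_const_nhds
        · have hjr : z j < z r := (hρsupp' z hz).2.1 r j hrj
          have hev : ∀ᶠ t in nhdsWithin 0 (Set.Ioi 0), F t z = 0 := by
            have hmem : Set.Ioo (0:ℝ) (z r - z j) ∈ nhdsWithin 0 (Set.Ioi 0) :=
              Ioo_mem_nhdsGT_of_mem ⟨le_refl 0, by linarith⟩
            filter_upwards [hmem] with t ht
            have hneg : z j + t - z r ≤ 0 := by
              have := ht.2; linarith
            simp [F, max_eq_left hneg]
          exact (Filter.tendsto_congr' hev).2 tendsto_const_nhds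
    have hFlim0 : Filter.Tendsto (fun t => ∫ z, F t z) (nhdsWithin 0 (Set.Ioi 0)) (nhds 0) := by
      simpa using hFlim
    have hevle : (fun t => (f (x + t • v) - f (x + (0:ℝ) • v)) / t)
        ≤ᶠ[nhdsWithin 0 (Set.Ioi 0)] (fun t => ∫ z, F t z) := by
      refine Filter.eventually_of_mem self_mem_nhdsWithin fun t (ht : (0:ℝ) < t) => ?_
      have := hbound t ht
      simpa using this
    exact le_of_tendsto_of_tendsto hslope hFlim0 hevle
  linarith

end PartC

theorem stmt_17 {d : ℕ} (hd : 0 < d) (χ : ℝ) (hχ : 0 < χ)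
    (ρ : EuclideanSpace ℝ (Fin d) → ℝ)
    (hρsmooth : ContDiff ℝ (⊤ : ℕ∞) ρ) (hρnn : ∀ z, 0 ≤ ρ z)
    (hρint : ∫ z, ρ z = 1)
    (hρsupp : Function.support ρ ⊆
      {z | 0 < z ⟨d - 1, Nat.sub_lt hd one_pos⟩ ∧
        (∀ i j : Fin d, i < j → z j < z i) ∧ z ⟨0, hd⟩ < χ})
    (f : EuclideanSpace ℝ (Fin d) → ℝ)
    (hf : ∀ x, f x = ∫ z, maxCoord hd (x + z) * ρ z) :
    ConvexOn ℝ Set.univ f ∧ LipschitzWith 1 f ∧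
    (∀ x, gradient f x ∈
      convexHull ℝ (Set.range fun i : Fin d => EuclideanSpace.single i (1 : ℝ))) ∧
    (∀ x, 1 / Real.sqrt d ≤ ‖gradient f x‖ ∧ ‖gradient f x‖ ≤ 1) ∧
    (∀ x : EuclideanSpace ℝ (Fin d), ∀ r : Fin d,
      (∀ j : Fin d, r ≤ j → x j = 0) →
      ∀ j : Fin d, r < j → gradient f x j = 0) := by
  have hρsupp' : ∀ z, ρ z ≠ 0 →
      (0 < z ⟨d - 1, Nat.sub_lt hd one_pos⟩ ∧
        (∀ i j : Fin d, i < j → z j < z i) ∧ z ⟨0, hd⟩ < χ) :=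
    fun z hz => hρsupp hz
  have hdiff := f_smooth hd hχ hρsmooth hρsupp' hf
  have hlip := f_lipschitz hd hχ hρsmooth hρnn hρint hρsupp' hf
  have hconvex := f_convex hd hχ hρsmooth hρnn hρsupp' hf
  -- each component of the gradient is nonnegative
  have hnn : ∀ (x : EuclideanSpace ℝ (Fin d)) (i : Fin d), 0 ≤ gradient f x i := by
    intro x i
    rw [gradient_component]
    have hder := hasDerivAt_dir hdiff x (EuclideanSpace.single i (1:ℝ))
    have hslope := tendsto_slope_right hder
    refine ge_of_tendsto hslope
      (Filter.eventually_of_mem self_mem_nhdsWithin fun t (ht : (0:ℝ) < t) => ?_)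
    have hm := f_mono_single hd hχ hρsmooth hρnn hρsupp' hf x i (le_of_lt ht)
    have hg0 : f (x + (0:ℝ) • EuclideanSpace.single i (1:ℝ)) = f x := by
      rw [zero_smul, add_zero]
    simp only [hg0]
    exact div_nonneg (by linarith) (le_of_lt ht)
  -- fderiv in the direction of all-ones equals 1
  have hones : ∀ x : EuclideanSpace ℝ (Fin d), fderiv ℝ f x (allOnes d) = 1 := by
    intro x
    have h1 := hasDerivAt_dir hdiff x (allOnes d)
    have heq : (fun t : ℝ => f (x + t • allOnes d)) = fun t : ℝ => f x + t :=
      funext (f_add_ones hd hχ hρsmooth hρint hρsupp' hf x)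
    rw [heq] at h1
    have h2 : HasDerivAt (fun t : ℝ => f x + t) 1 0 := by
      simpa using (hasDerivAt_id (0:ℝ)).const_add (f x)
    exact h1.unique h2
  -- sum of gradient components is 1
  have hsum : ∀ x : EuclideanSpace ℝ (Fin d), (∑ i : Fin d, gradient f x i) = 1 := by
    intro x
    have : (∑ i : Fin d, gradient f x i)
        = fderiv ℝ f x (∑ i : Fin d, EuclideanSpace.single i (1:ℝ)) := by
      rw [map_sum]
      exact Finset.sum_congr rfl fun i _ => gradient_component f x i
    rw [this, sum_single_eq_allOnes, hones x]
  refine ⟨hconvex, hlip, ?_, ?_, ?_⟩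
  · intro x
    have hrepr : gradient f x
        = ∑ i : Fin d, gradient f x i • EuclideanSpace.single i (1:ℝ) := by
      ext j
      have : (∑ i : Fin d, gradient f x i • EuclideanSpace.single i (1:ℝ)) j
          = ∑ i : Fin d, (gradient f x i • EuclideanSpace.single i (1:ℝ)) j :=
        by rw [WithLp.ofLp_sum]; exact Finset.sum_apply j Finset.univ _
      rw [this]
      simp [EuclideanSpace.single_apply]
    rw [hrepr]
    exact (convex_convexHull ℝ _).sum_mem (fun i _ => hnn x i) (hsum x)
      (fun i _ => subset_convexHull ℝ _ (Set.mem_range_self i))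
  · intro x
    constructor
    · have h1 : (inner ℝ (gradient f x) (allOnes d) : ℝ) = 1 := by
        rw [inner_gradient, hones x]
      have h2 := real_inner_le_norm (gradient f x) (allOnes d)
      rw [h1, norm_allOnes] at h2
      have hds : (0:ℝ) < Real.sqrt d := Real.sqrt_pos.2 (by exact_mod_cast hd)
      rw [div_le_iff₀ hds]
      linarith [mul_comm ‖gradient f x‖ (Real.sqrt d)]
    · have h1 := norm_fderiv_le_of_lipschitz ℝ hlip (x₀ := x)
      have h2 : ‖gradient f x‖ = ‖fderiv ℝ f x‖ := by
        rw [gradient]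
        exact LinearIsometryEquiv.norm_map _ _
      rw [h2]
      simpa using h1
  · intro x r hx j hrj
    rw [gradient_component]
    exact grad_zero_core hd hχ hρsmooth hρnn hρsupp' hf hdiff x r hx j hrj
end
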